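/- Let B̃₁ := q₁q₁* + q₂q₂* and B̃₂ := −B̃₁ be self-adjoint operators on ℂ², and C̃₁ := q₁q₁*, C̃₂ := q₂q₂* on ℂ². Then the spectrum of B̃₁ ⊗ C̃₁ + B̃₂ ⊗ C̃₂ is (1,1,−1,−1), while B̃₁^↓ ⊗ C̃₁^↓ + B̃₂^↓ ⊗ C̃₂^↓ = 0; in particular (1,1,−1,−1) is not majorized by (0,0,0,0), so the separable Fan majorization relation fails without positive semi-definiteness. -/

import Mathlib

/-! Both operators are diagonal in the product basis: `B̃₁ ⊗ C̃₁ + B̃₂ ⊗ C̃₂ = I ⊗ diag(1, -1)`,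
whose spectrum is read off the diagonal, while aligning `C̃₂ = q₂q₂*` turns it into
`q₁q₁*`, so the two aligned terms cancel. Majorization already fails for the largest
eigenvalue: `1 > 0`. -/

open Matrix Kronecker

/-- Sum of the `k` largest values of `f` (as the sup of sums over `k`-subsets). -/
noncomputable def sk {ι : Type*} [Fintype ι] (f : ι → ℝ) (k : ℕ) : ℝ :=
  sSup {x | ∃ S : Finset ι, S.card = k ∧ x = ∑ i ∈ S, f i}

theorem Matrix.IsHermitian.map_eigenvalues_of_eq_diagonal {𝕜 n : Type*} [RCLike 𝕜] [Fintype n]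
    [DecidableEq n] {A : Matrix n n 𝕜} (hA : A.IsHermitian) {d : n → ℝ}
    (hd : A = diagonal fun i => (d i : 𝕜)) :
    Finset.univ.val.map hA.eigenvalues = Finset.univ.val.map d := by
  have hroots : A.charpoly.roots = Finset.univ.val.map (RCLike.ofReal ∘ d) := by
    rw [hd, charpoly_diagonal, Polynomial.roots_prod]
    · simp
    · simp [Finset.prod_ne_zero_iff, Polynomial.X_sub_C_ne_zero]
  rw [hA.roots_charpoly_eq_eigenvalues, ← Multiset.map_map, ← Multiset.map_map] at hroots
  exact Multiset.map_injective RCLike.ofReal_injective hroots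

section sk

variable {ι : Type*} [Fintype ι]

theorem sum_le_sk (f : ι → ℝ) (S : Finset ι) : ∑ i ∈ S, f i ≤ sk f S.card := by
  refine le_csSup ?_ ⟨S, rfl, rfl⟩
  refine ((Finset.univ.powerset.image fun T => ∑ i ∈ T, f i).finite_toSet.subset ?_).bddAbove
  rintro _ ⟨T, -, rfl⟩
  simp

theorem sk_nonpos {f : ι → ℝ} (hf : ∀ i, f i ≤ 0) (k : ℕ) : sk f k ≤ 0 :=
  Real.sSup_nonpos fun _ ⟨_, _, hx⟩ => hx ▸ Finset.sum_nonpos fun i _ => hf i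

end sk

theorem one_kronecker_add_neg_one_kronecker_eq_diagonal :
    (1 : Matrix (Fin 2) (Fin 2) ℂ) ⊗ₖ diagonal ![1, 0]
        + (-1 : Matrix (Fin 2) (Fin 2) ℂ) ⊗ₖ diagonal ![0, 1]
      = diagonal fun p : Fin 2 × Fin 2 => ((![1, -1] p.2 : ℝ) : ℂ) := by
  rw [← diagonal_one, diagonal_neg, diagonal_kronecker_diagonal, diagonal_kronecker_diagonal,
    diagonal_add]
  congr 1
  ext ⟨i, j⟩
  fin_cases j <;> simp

theorem map_univ_snd_one_neg_one :
    Finset.univ.val.map (fun p : Fin 2 × Fin 2 => (![1, -1] p.2 : ℝ)) = {1, 1, -1, -1} := by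
  have huniv : (Finset.univ : Finset (Fin 2 × Fin 2)).val = {(0, 0), (0, 1), (1, 0), (1, 1)} := by
    decide
  simp [huniv, Multiset.cons_swap]

/-- Counterexample without positive semi-definiteness: with `B̃₁ = I = -B̃₂`,
`C̃₁ = q₁q₁*`, `C̃₂ = q₂q₂*`, the spectrum of `B̃₁⊗C̃₁ + B̃₂⊗C̃₂` is `(1,1,-1,-1)`, while
`B̃₁^↓⊗C̃₁^↓ + B̃₂^↓⊗C̃₂^↓ = I⊗diag(1,0) + (-I)⊗diag(1,0) = 0`, and `(1,1,-1,-1)` is not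
majorized by `(0,0,0,0)`. -/
theorem stmt12
    (hA : ((1 : Matrix (Fin 2) (Fin 2) ℂ) ⊗ₖ Matrix.diagonal ![1, 0]
      + (-(1 : Matrix (Fin 2) (Fin 2) ℂ)) ⊗ₖ Matrix.diagonal ![0, 1]).IsHermitian) :
    Finset.univ.val.map hA.eigenvalues = ({1, 1, -1, -1} : Multiset ℝ)
    ∧ (1 : Matrix (Fin 2) (Fin 2) ℂ) ⊗ₖ Matrix.diagonal ![(1 : ℂ), 0]
        + (-(1 : Matrix (Fin 2) (Fin 2) ℂ)) ⊗ₖ Matrix.diagonal ![(1 : ℂ), 0] = 0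
    ∧ ¬ ((∀ k ≤ 4, sk (![1, 1, -1, -1] : Fin 4 → ℝ) k ≤ sk (0 : Fin 4 → ℝ) k)
          ∧ sk (![1, 1, -1, -1] : Fin 4 → ℝ) 4 = sk (0 : Fin 4 → ℝ) 4) := by
  refine ⟨?_, ?_, ?_⟩
  · exact (hA.map_eigenvalues_of_eq_diagonal one_kronecker_add_neg_one_kronecker_eq_diagonal).trans
      map_univ_snd_one_neg_one
  · rw [← add_kronecker]
    simp
  · rintro ⟨hle, -⟩
    have htop : (1 : ℝ) ≤ sk ![1, 1, -1, -1] 1 := by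
      simpa using sum_le_sk ![(1 : ℝ), 1, -1, -1] {0}
    have hzero : sk (0 : Fin 4 → ℝ) 1 ≤ 0 := sk_nonpos (fun _ => le_rfl) 1
    linarith [hle 1 (by norm_num)]
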